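/- arXiv:2008.02375 — 7 statements merged into one kernel-verified Lean document; each statement's English description precedes it below -/
import Mathlib

section
/- Let G be a (simple, loopless) graph on a vertex set V satisfying the extension property: for all disjoint finite sets A, B ⊆ V there exists a vertex v ∉ A ∪ B adjacent to every vertex of A and to no vertex of B. Then for every partition of V into two sets R and S, at least one of the parts P ∈ {R, S} itself satisfies the extension property within P: for all disjoint finite A, B ⊆ P there exists v ∈ P \ (A ∪ B) adjacent to every vertex of A and to no vertex of B. -/
/-! If both parts failed, pick failing pairs `(A₁, B₁)` in `R` and `(A₂, B₂)` in `S`. Since `R` and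
`S` are disjoint, `A₁ ∪ A₂` and `B₁ ∪ B₂` are disjoint, so the extension property of the whole
graph yields a vertex `v` joined to all of `A₁ ∪ A₂` and to none of `B₁ ∪ B₂`. Whichever part
contains `v`, it witnesses the extension for that part's pair, a contradiction. -/

namespace SimpleGraph

variable {V : Type*} [DecidableEq V] (G : SimpleGraph V)

def IsExtensionVertex (A B : Finset V) (v : V) : Prop :=
  v ∉ A ∪ B ∧ (∀ a ∈ A, G.Adj v a) ∧ ∀ b ∈ B, ¬ G.Adj v b

def HasExtensionPropertyOn (P : Set V) : Prop :=
  ∀ A B : Finset V, ↑A ⊆ P → ↑B ⊆ P → Disjoint A B → ∃ v ∈ P, G.IsExtensionVertex A B v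

variable {G}

theorem IsExtensionVertex.mono {A B A' B' : Finset V} {v : V} (h : G.IsExtensionVertex A B v)
    (hA : A' ⊆ A) (hB : B' ⊆ B) : G.IsExtensionVertex A' B' v :=
  ⟨fun hv => h.1 (Finset.union_subset_union hA hB hv), fun a ha => h.2.1 a (hA ha),
    fun b hb => h.2.2 b (hB hb)⟩

theorem hasExtensionPropertyOn_univ
    (hext : ∀ A B : Finset V, Disjoint A B → ∃ v, G.IsExtensionVertex A B v) :
    G.HasExtensionPropertyOn Set.univ := fun A B _ _ hAB =>
  (hext A B hAB).imp fun _ hv => ⟨Set.mem_univ _, hv⟩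

theorem HasExtensionPropertyOn.left_or_right {R S : Set V}
    (h : G.HasExtensionPropertyOn (R ∪ S)) (hRS : Disjoint R S) :
    G.HasExtensionPropertyOn R ∨ G.HasExtensionPropertyOn S := by
  by_contra! hfail
  simp only [HasExtensionPropertyOn, not_forall, not_exists, not_and] at hfail
  obtain ⟨⟨A₁, B₁, hA₁, hB₁, hAB₁, hR⟩, ⟨A₂, B₂, hA₂, hB₂, hAB₂, hS⟩⟩ := hfail
  have hAB₁₂ : Disjoint A₁ B₂ := Finset.disjoint_coe.mp (hRS.mono hA₁ hB₂)
  have hAB₂₁ : Disjoint A₂ B₁ := Finset.disjoint_coe.mp (hRS.symm.mono hA₂ hB₁)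
  have hAB : Disjoint (A₁ ∪ A₂) (B₁ ∪ B₂) := by
    simp only [Finset.disjoint_union_left, Finset.disjoint_union_right]
    exact ⟨⟨hAB₁, hAB₂₁⟩, hAB₁₂, hAB₂⟩
  obtain ⟨v, hv | hv, hvext⟩ := h (A₁ ∪ A₂) (B₁ ∪ B₂)
    (by push_cast; exact Set.union_subset_union hA₁ hA₂)
    (by push_cast; exact Set.union_subset_union hB₁ hB₂) hAB
  · exact hR v hv (hvext.mono Finset.subset_union_left Finset.subset_union_left)
  · exact hS v hv (hvext.mono Finset.subset_union_right Finset.subset_union_right)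

end SimpleGraph

theorem rado_partition_extension_general {V : Type*} [DecidableEq V] (G : SimpleGraph V)
    (hext : ∀ A B : Finset V, Disjoint A B →
      ∃ v, v ∉ A ∪ B ∧ (∀ a ∈ A, G.Adj v a) ∧ ∀ b ∈ B, ¬ G.Adj v b)
    (R S : Set V) (hdisj : Disjoint R S) (hcover : R ∪ S = Set.univ) :
    (∀ A B : Finset V, ↑A ⊆ R → ↑B ⊆ R → Disjoint A B →
      ∃ v ∈ R, v ∉ A ∪ B ∧ (∀ a ∈ A, G.Adj v a) ∧ ∀ b ∈ B, ¬ G.Adj v b) ∨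
    (∀ A B : Finset V, ↑A ⊆ S → ↑B ⊆ S → Disjoint A B →
      ∃ v ∈ S, v ∉ A ∪ B ∧ (∀ a ∈ A, G.Adj v a) ∧ ∀ b ∈ B, ¬ G.Adj v b) := by
  have hRS : G.HasExtensionPropertyOn (R ∪ S) :=
    hcover ▸ SimpleGraph.hasExtensionPropertyOn_univ hext
  exact hRS.left_or_right hdisj

theorem rado_partition_extension {V : Type*} [Countable V] [DecidableEq V] (G : SimpleGraph V)
    (hext : ∀ A B : Finset V, Disjoint A B →
      ∃ v, v ∉ A ∪ B ∧ (∀ a ∈ A, G.Adj v a) ∧ ∀ b ∈ B, ¬ G.Adj v b)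
    (R S : Set V) (hdisj : Disjoint R S) (hcover : R ∪ S = Set.univ) :
    (∀ A B : Finset V, ↑A ⊆ R → ↑B ⊆ R → Disjoint A B →
      ∃ v ∈ R, v ∉ A ∪ B ∧ (∀ a ∈ A, G.Adj v a) ∧ ∀ b ∈ B, ¬ G.Adj v b) ∨
    (∀ A B : Finset V, ↑A ⊆ S → ↑B ⊆ S → Disjoint A B →
      ∃ v ∈ S, v ∉ A ∪ B ∧ (∀ a ∈ A, G.Adj v a) ∧ ∀ b ∈ B, ¬ G.Adj v b) :=
  rado_partition_extension_general G hext R S hdisj hcover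
end

section
/- Let G be a countable triangle-free graph with the triangle-free extension property: for every finite independent set A and every finite set B disjoint from A, there exists a vertex v ∉ A ∪ B adjacent to every vertex of A and to no vertex of B. Then for every vertex u, the set N of non-neighbours of u (excluding u itself) is infinite and the induced subgraph on N again satisfies the triangle-free extension property. -/
/-!
Apply the extension property with `u` added to the forbidden set `B`: the resulting vertex is
distinct from `u` and not adjacent to it, i.e. it lies in `N`. With `A = ∅` and `B` any finite
subset of `N` this produces a point of `N` outside `B`, so `N` is infinite.
-/

namespace SimpleGraph

variable {V : Type*} [DecidableEq V] {G : SimpleGraph V}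

lemma exists_extension_nonadj_of_notMem
    (hext : ∀ A B : Finset V, (∀ a ∈ A, ∀ a' ∈ A, ¬ G.Adj a a') → Disjoint A B →
      ∃ v, v ∉ A ∪ B ∧ (∀ a ∈ A, G.Adj v a) ∧ ∀ b ∈ B, ¬ G.Adj v b)
    {A B : Finset V} (hind : ∀ a ∈ A, ∀ a' ∈ A, ¬ G.Adj a a') (hdisj : Disjoint A B)
    {u : V} (huA : u ∉ A) :
    ∃ v, (v ≠ u ∧ ¬ G.Adj u v) ∧ v ∉ A ∪ B ∧ (∀ a ∈ A, G.Adj v a) ∧ ∀ b ∈ B, ¬ G.Adj v b := by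
  obtain ⟨v, hv, hadj, hnadj⟩ :=
    hext A (insert u B) hind (Finset.disjoint_insert_right.2 ⟨huA, hdisj⟩)
  have hvu : v ≠ u := by
    rintro rfl
    exact hv (by simp)
  refine ⟨v, ⟨hvu, fun h => hnadj u (by simp) h.symm⟩, ?_, hadj,
    fun b hb => hnadj b (Finset.mem_insert_of_mem hb)⟩
  simp only [Finset.mem_union, Finset.mem_insert, not_or] at hv ⊢
  exact ⟨hv.1, hv.2.2⟩

end SimpleGraph

theorem henson_nonneighbours_general {V : Type*} [DecidableEq V] (G : SimpleGraph V)
    (hext : ∀ A B : Finset V, (∀ a ∈ A, ∀ a' ∈ A, ¬ G.Adj a a') → Disjoint A B →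
      ∃ v, v ∉ A ∪ B ∧ (∀ a ∈ A, G.Adj v a) ∧ ∀ b ∈ B, ¬ G.Adj v b)
    (u : V) :
    let N : Set V := {v | v ≠ u ∧ ¬ G.Adj u v}
    N.Infinite ∧
      ∀ A B : Finset V, ↑A ⊆ N → ↑B ⊆ N → (∀ a ∈ A, ∀ a' ∈ A, ¬ G.Adj a a') →
        Disjoint A B →
        ∃ v ∈ N, v ∉ A ∪ B ∧ (∀ a ∈ A, G.Adj v a) ∧ ∀ b ∈ B, ¬ G.Adj v b := by
  intro N
  refine ⟨fun hfin => ?_, fun A B hA _ hind hdisj =>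
    G.exists_extension_nonadj_of_notMem hext hind hdisj fun hu => (hA hu).1 rfl⟩
  obtain ⟨v, hvN, hv, -⟩ := G.exists_extension_nonadj_of_notMem hext (A := ∅)
    (B := hfin.toFinset) (by simp) (by simp) (Finset.notMem_empty u)
  exact hv (Finset.mem_union_right _ (hfin.mem_toFinset.2 hvN))

theorem henson_nonneighbours {V : Type*} [Countable V] [DecidableEq V] (G : SimpleGraph V)
    (htf : G.CliqueFree 3)
    (hext : ∀ A B : Finset V, (∀ a ∈ A, ∀ a' ∈ A, ¬ G.Adj a a') → Disjoint A B →
      ∃ v, v ∉ A ∪ B ∧ (∀ a ∈ A, G.Adj v a) ∧ ∀ b ∈ B, ¬ G.Adj v b)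
    (u : V) :
    let N : Set V := {v | v ≠ u ∧ ¬ G.Adj u v}
    N.Infinite ∧
      ∀ A B : Finset V, ↑A ⊆ N → ↑B ⊆ N → (∀ a ∈ A, ∀ a' ∈ A, ¬ G.Adj a a') →
        Disjoint A B →
        ∃ v ∈ N, v ∉ A ∪ B ∧ (∀ a ∈ A, G.Adj v a) ∧ ∀ b ∈ B, ¬ G.Adj v b :=
  henson_nonneighbours_general G hext u
end

section
/- Let G be a subgroup of the symmetric group of a countable set U, and for S ⊆ U let ρ(S) be the set of finite A ⊆ U with g[A] ⊆ S for some g ∈ G. Fix n ∈ ℕ. Then S ⊆ U is n-age indivisible if and only if for every A ∈ ρ(S) there exists a finite B ∈ ρ(S) such that for every partition of B into n parts B₀,…,B_{n−1} there is an index i with A ∈ ρ(B_i). -/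
/-- The `G`-age of a set `S`: finite subsets of `U` that can be mapped into `S`
by some element of `G`. -/
def Gage {U : Type*} (G : Subgroup (Equiv.Perm U)) (S : Set U) : Set (Finset U) :=
  {A | ∃ g ∈ G, ∀ a ∈ A, g a ∈ S}

/-- `P` is a partition of `S` into `n` parts. -/
def IsPartitionInto {U : Type*} (S : Set U) (n : ℕ) (P : Fin n → Set U) : Prop :=
  (∀ i j, i ≠ j → Disjoint (P i) (P j)) ∧ (⋃ i, P i) = S

/-- `S` is `n`-age indivisible for `G`. -/
def NAgeIndivisible {U : Type*} (G : Subgroup (Equiv.Perm U)) (S : Set U) (n : ℕ) : Prop :=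
  ∀ P : Fin n → Set U, IsPartitionInto S n P → ∃ i, Gage G (P i) = Gage G S

/-!
Backward direction: if a partition `P` of `S` had every `ρ(Pᵢ)` strictly smaller than `ρ(S)`,
pick witnesses `Aᵢ ∈ ρ(S) \ ρ(Pᵢ)` and a single finite `A ⊆ S` whose age contains all of them;
pulling `P` back to the finite set `B` given for `A` yields a part `Bᵢ` with `A ∈ ρ(Bᵢ)`, hence
`Aᵢ ∈ ρ(Pᵢ)`.

Forward direction, by compactness: if some `A ∈ ρ(S)` admits, for every finite `F ⊆ S`, a
partition of `F` into `n` parts none of whose ages contains `A`, then the limit of these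
partitions along an ultrafilter on the finite subsets of `U` finer than `atTop` is a partition
of `S` with the same property, since membership `A ∈ ρ(Pᵢ)` is witnessed by finitely many points.
-/

open Finset Filter

section limitPartition

variable {ι κ V : Type*}

def limitPartition (𝒰 : Ultrafilter ι) (Q : ι → κ → Set V) (i : κ) : Set V :=
  {x | ∀ᶠ k in 𝒰, x ∈ Q k i}

variable {𝒰 : Ultrafilter ι} {Q : ι → κ → Set V}

lemma disjoint_limitPartition (hQ : ∀ k i j, i ≠ j → Disjoint (Q k i) (Q k j)) {i j : κ}
    (hij : i ≠ j) : Disjoint (limitPartition 𝒰 Q i) (limitPartition 𝒰 Q j) := by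
  refine Set.disjoint_left.2 fun x hi hj => ?_
  obtain ⟨k, hki, hkj⟩ := (hi.and hj).exists
  exact Set.disjoint_left.1 (hQ k i j hij) hki hkj

lemma exists_mem_limitPartition [Finite κ] {x : V} (hx : ∀ᶠ k in 𝒰, ∃ i, x ∈ Q k i) :
    ∃ i, x ∈ limitPartition 𝒰 Q i :=
  Ultrafilter.eventually_exists_iff.1 hx

lemma eventually_subset_of_subset_limitPartition {A : Finset V} {i : κ}
    (hA : ↑A ⊆ limitPartition 𝒰 Q i) : ∀ᶠ k in 𝒰, ↑A ⊆ Q k i := by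
  simp only [Set.subset_def, mem_coe]
  exact (eventually_all_finset A).2 fun x hx => hA hx

lemma isPartitionInto_inter_limitPartition {S : Set V} {n : ℕ} {Q : ι → Fin n → Set V}
    (hQ : ∀ k i j, i ≠ j → Disjoint (Q k i) (Q k j))
    (hS : ∀ x ∈ S, ∀ᶠ k in 𝒰, ∃ i, x ∈ Q k i) :
    IsPartitionInto S n fun i => S ∩ limitPartition 𝒰 Q i := by
  refine ⟨fun i j hij => (disjoint_limitPartition hQ hij).mono Set.inter_subset_right
    Set.inter_subset_right, ?_⟩
  rw [← Set.inter_iUnion, Set.inter_eq_left]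
  intro x hx
  exact Set.mem_iUnion.2 (exists_mem_limitPartition (hS x hx))

end limitPartition

section

variable {U : Type*} {G : Subgroup (Equiv.Perm U)}

lemma mem_gage_of_subset {S : Set U} {A : Finset U} (h : ↑A ⊆ S) : A ∈ Gage G S :=
  ⟨1, one_mem G, fun _ ha => h ha⟩

lemma gage_mono {S T : Set U} (h : S ⊆ T) : Gage G S ⊆ Gage G T :=
  fun _ ⟨g, hgG, hg⟩ => ⟨g, hgG, fun a ha => h (hg a ha)⟩

lemma mem_gage_trans {S : Set U} {A B : Finset U} (hA : A ∈ Gage G ↑B) (hB : B ∈ Gage G S) :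
    A ∈ Gage G S := by
  obtain ⟨h, hhG, hh⟩ := hA
  obtain ⟨g, hgG, hg⟩ := hB
  exact ⟨g * h, mul_mem hgG hhG, fun a ha => hg _ (hh a ha)⟩

lemma exists_finset_subset_forall_mem_gage {ι : Type*} [Finite ι] {S : Set U}
    {A : ι → Finset U} (hA : ∀ i, A i ∈ Gage G S) :
    ∃ B : Finset U, ↑B ⊆ S ∧ ∀ i, A i ∈ Gage G ↑B := by
  classical
  have := Fintype.ofFinite ι
  choose g hgG hg using hA
  refine ⟨univ.biUnion fun i => (A i).image (g i), ?_, fun i => ⟨g i, hgG i, fun a ha => ?_⟩⟩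
  · intro x hx
    simp only [coe_biUnion, coe_univ, Set.mem_univ, Set.iUnion_true, coe_image,
      Set.mem_iUnion, Set.mem_image, mem_coe] at hx
    obtain ⟨i, a, ha, rfl⟩ := hx
    exact hg i a ha
  · simp only [coe_biUnion, coe_univ, Set.mem_univ, Set.iUnion_true, coe_image,
      Set.mem_iUnion, Set.mem_image, mem_coe]
    exact ⟨i, a, ha, rfl⟩

lemma IsPartitionInto.exists_finset_pullback [DecidableEq U] {V : Type*} {S : Set V} {n : ℕ}
    {P : Fin n → Set V} (hP : IsPartitionInto S n P) (f : U → V) {B : Finset U}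
    (hB : ∀ b ∈ B, f b ∈ S) :
    ∃ Q : Fin n → Finset U, (∀ i j, i ≠ j → Disjoint (Q i) (Q j)) ∧
      univ.biUnion Q = B ∧ ∀ i, ∀ b ∈ Q i, f b ∈ P i := by
  classical
  refine ⟨fun i => B.filter (f · ∈ P i), fun i j hij => ?_, ?_,
    fun i b hb => (mem_filter.1 hb).2⟩
  · exact disjoint_filter.2 fun x _ => @Set.disjoint_left.1 (hP.1 i j hij) (f x)
  · ext b
    simp only [mem_biUnion, mem_univ, true_and, mem_filter]
    refine ⟨fun ⟨_, hb, _⟩ => hb, fun hb => ?_⟩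
    obtain ⟨i, hi⟩ := Set.mem_iUnion.1 (hP.2.symm ▸ hB b hb : f b ∈ ⋃ i, P i)
    exact ⟨i, hb, hi⟩

variable [DecidableEq U]

def FinitaryAgeIndivisible (G : Subgroup (Equiv.Perm U)) (S : Set U) (n : ℕ) : Prop :=
  ∀ A ∈ Gage G S, ∃ B ∈ Gage G S,
    ∀ Q : Fin n → Finset U, (∀ i j, i ≠ j → Disjoint (Q i) (Q j)) →
      univ.biUnion Q = B → ∃ i, A ∈ Gage G ↑(Q i)

theorem FinitaryAgeIndivisible.nAgeIndivisible {S : Set U} {n : ℕ}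
    (hfin : FinitaryAgeIndivisible G S n) : NAgeIndivisible G S n := by
  intro P hP
  by_contra! hne
  have hPS : ∀ i, P i ⊆ S := fun i => hP.2 ▸ Set.subset_iUnion P i
  have hwit : ∀ i, ∃ Aᵢ ∈ Gage G S, Aᵢ ∉ Gage G (P i) := fun i =>
    Set.exists_of_ssubset ((gage_mono (hPS i)).ssubset_of_ne (hne i))
  choose Aᵢ hAᵢS hAᵢP using hwit
  obtain ⟨A, hAS, hAᵢA⟩ := exists_finset_subset_forall_mem_gage hAᵢS
  obtain ⟨B, ⟨g, hgG, hgB⟩, hB⟩ := hfin A (mem_gage_of_subset hAS)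
  obtain ⟨Q, hQdisj, hQB, hQP⟩ := hP.exists_finset_pullback g hgB
  obtain ⟨i, hAQ⟩ := hB Q hQdisj hQB
  exact hAᵢP i (mem_gage_trans (mem_gage_trans (hAᵢA i) hAQ) ⟨g, hgG, hQP i⟩)

theorem NAgeIndivisible.finitaryAgeIndivisible {S : Set U} {n : ℕ}
    (hind : NAgeIndivisible G S n) : FinitaryAgeIndivisible G S n := by
  classical
  intro A hA
  by_contra! hbad
  have hbadF : ∀ F : Finset U, ∃ Q : Fin n → Finset U, (∀ i j, i ≠ j → Disjoint (Q i) (Q j)) ∧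
      univ.biUnion Q = {x ∈ F | x ∈ S} ∧ ∀ i, A ∉ Gage G ↑(Q i) := fun F =>
    hbad _ (mem_gage_of_subset fun x hx => (mem_filter.1 hx).2)
  choose Q hQdisj hQF hQA using hbadF
  let 𝒰 := Ultrafilter.of (atTop : Filter (Finset U))
  have hP : IsPartitionInto S n fun i => S ∩ limitPartition 𝒰 (fun F i => ↑(Q F i)) i := by
    refine isPartitionInto_inter_limitPartition
      (fun F i j hij => disjoint_coe.2 (hQdisj F i j hij)) fun x hx => ?_
    filter_upwards [Ultrafilter.of_le _ (eventually_ge_atTop {x})] with F hxF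
    have hx' : x ∈ univ.biUnion (Q F) := by
      rw [hQF]; exact mem_filter.2 ⟨singleton_subset_iff.1 hxF, hx⟩
    simpa using hx'
  obtain ⟨i, hi⟩ := hind _ hP
  obtain ⟨g, hgG, hg⟩ : A ∈ Gage G _ := hi ▸ hA
  have himage : (A.image g : Set U) ⊆ limitPartition 𝒰 (fun F i => ↑(Q F i)) i := by
    rw [coe_image, Set.image_subset_iff]
    exact fun a ha => (hg a ha).2
  obtain ⟨F, hF⟩ := (eventually_subset_of_subset_limitPartition himage).exists
  exact hQA F i ⟨g, hgG, fun a ha => hF (mem_image_of_mem g ha)⟩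

end

theorem nAgeIndivisible_iff_finitary_general {U : Type*} [DecidableEq U]
    (G : Subgroup (Equiv.Perm U)) (S : Set U) (n : ℕ) :
    NAgeIndivisible G S n ↔
      ∀ A ∈ Gage G S, ∃ B ∈ Gage G S,
        ∀ Q : Fin n → Finset U, (∀ i j, i ≠ j → Disjoint (Q i) (Q j)) →
          Finset.univ.biUnion Q = B → ∃ i, A ∈ Gage G ↑(Q i) :=
  ⟨NAgeIndivisible.finitaryAgeIndivisible, FinitaryAgeIndivisible.nAgeIndivisible⟩

theorem nAgeIndivisible_iff_finitary {U : Type*} [Countable U] [Infinite U] [DecidableEq U]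
    (G : Subgroup (Equiv.Perm U)) (S : Set U) (n : ℕ) :
    NAgeIndivisible G S n ↔
      ∀ A ∈ Gage G S, ∃ B ∈ Gage G S,
        ∀ Q : Fin n → Finset U, (∀ i j, i ≠ j → Disjoint (Q i) (Q j)) →
          Finset.univ.biUnion Q = B → ∃ i, A ∈ Gage G ↑(Q i) :=
  nAgeIndivisible_iff_finitary_general G S n
end

section
/- Let U be an infinite set, (𝒮, ⊑) a partial order with maximum element u, (ℛ, ⊆) a linear order, σ a map from 𝒮 to infinite subsets of U with σ(u) = U, and ρ : 𝒮 → ℛ, such that: X ⊑ Y implies σ(X) ⊆ σ(Y) and ρ(X) ⊆ ρ(Y); and for every X ∈ 𝒮 and r ∈ ℛ with r ⊆ ρ(X) there exists R ⊑ X with ρ(R) = r. Call Y a refinement of X if Y ⊑ X and ρ(Y) = ρ(X), and an r-restriction of X if Y ⊑ X and ρ(Y) = r. Call a set S ⊆ U large if there exists 𝒲 ⊆ 𝒮 containing u such that for every X ∈ 𝒲: σ(X) ∩ S is infinite, and for every r ⊆ ρ(X) there exists a refinement Y of X such that every refinement Z of Y admits an r-restriction R of Z with R ∈ 𝒲. Then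 for every partition of U into two parts S and P, at least one of S, P is large. -/
/-- `S ⊆ U` is large with respect to the data `(σ, ρ, u)`: there is a witness set
`𝒲` of sorts containing the maximum `u` such that for every `X ∈ 𝒲`, `σ X ∩ S` is
infinite and for every rank `r ≤ ρ X` there is a refinement `Y` of `X` such that
every refinement `Z` of `Y` has an `r`-restriction belonging to `𝒲`. -/
def IsLarge {U 𝒮 ℛ : Type*} [PartialOrder 𝒮] [LinearOrder ℛ]
    (σ : 𝒮 → Set U) (ρ : 𝒮 → ℛ) (u : 𝒮) (S : Set U) : Prop :=
  ∃ 𝒲 : Set 𝒮, u ∈ 𝒲 ∧ ∀ X ∈ 𝒲, (σ X ∩ S).Infinite ∧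
    ∀ r : ℛ, r ≤ ρ X →
      ∃ Y, (Y ≤ X ∧ ρ Y = ρ X) ∧
        ∀ Z, Z ≤ Y → ρ Z = ρ Y →
          ∃ R, (R ≤ Z ∧ ρ R = r) ∧ R ∈ 𝒲

/-!
Label the sorts inductively: `X` is labelled if `σ X ∩ P` is finite, or if for some `r₀ ≤ ρ X`
every refinement of `X` has a refinement all of whose `r₀`-restrictions are labelled. The
labelled sorts witness that `S` is large, linearity of `ℛ` letting every target rank be
compared with `r₀`; the unlabelled sorts witness that `P` is large, since failing both clauses
of the labelling is exactly the largeness condition.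
-/

section Refinement

variable {𝒮 ℛ : Type*} [Preorder 𝒮]

def RestrictsInto (ρ : 𝒮 → ℛ) (𝒲 : Set 𝒮) (r : ℛ) (X : 𝒮) : Prop :=
  ∃ Y, (Y ≤ X ∧ ρ Y = ρ X) ∧ ∀ Z, Z ≤ Y → ρ Z = ρ Y → ∃ R, (R ≤ Z ∧ ρ R = r) ∧ R ∈ 𝒲

def RestrictsOnlyInto (ρ : 𝒮 → ℛ) (𝒲 : Set 𝒮) (r : ℛ) (X : 𝒮) : Prop :=
  ∀ Y, Y ≤ X → ρ Y = ρ X → ∃ Z, (Z ≤ Y ∧ ρ Z = ρ Y) ∧ ∀ R, R ≤ Z → ρ R = r → R ∈ 𝒲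

variable {ρ : 𝒮 → ℛ} {r : ℛ}

theorem not_restrictsInto_compl_iff {𝒲 : Set 𝒮} {X : 𝒮} :
    ¬ RestrictsInto ρ 𝒲ᶜ r X ↔ RestrictsOnlyInto ρ 𝒲 r X := by
  simp [RestrictsInto, RestrictsOnlyInto, and_assoc]

theorem RestrictsOnlyInto.mono {𝒲 𝒲' : Set 𝒮} (h𝒲 : 𝒲 ⊆ 𝒲') {X : 𝒮}
    (h : RestrictsOnlyInto ρ 𝒲 r X) : RestrictsOnlyInto ρ 𝒲' r X := fun Y hY hρY =>
  let ⟨Z, hZ, hZ𝒲⟩ := h Y hY hρY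
  ⟨Z, hZ, fun R hR hρR => h𝒲 (hZ𝒲 R hR hρR)⟩

theorem RestrictsOnlyInto.exists_mem_le [LE ℛ] (hrestrict : ∀ X r, r ≤ ρ X → ∃ R, R ≤ X ∧ ρ R = r)
    {𝒲 : Set 𝒮} {X : 𝒮} (h : RestrictsOnlyInto ρ 𝒲 r X) (hr : r ≤ ρ X) : ∃ R ∈ 𝒲, R ≤ X := by
  obtain ⟨Z, ⟨hZX, hρZ⟩, hZ⟩ := h X le_rfl rfl
  obtain ⟨R, hRZ, hρR⟩ := hrestrict Z r (hρZ ▸ hr)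
  exact ⟨R, hZ R hRZ hρR, hRZ.trans hZX⟩

end Refinement

theorem Set.Infinite.inter_of_finite_inter_of_union_eq_univ {U : Type*} {s S P : Set U}
    (hs : s.Infinite) (hP : (s ∩ P).Finite) (hcover : S ∪ P = Set.univ) : (s ∩ S).Infinite := by
  refine (hs.sdiff hP).mono fun x hx => ⟨hx.1, ?_⟩
  have hxSP : x ∈ S ∪ P := hcover ▸ Set.mem_univ x
  exact hxSP.resolve_right fun hxP => hx.2 ⟨hx.1, hxP⟩

section Labelling

variable {U 𝒮 ℛ : Type*} [Preorder 𝒮] [LE ℛ]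

def IsLargeWitness (σ : 𝒮 → Set U) (ρ : 𝒮 → ℛ) (S : Set U) (𝒲 : Set 𝒮) : Prop :=
  ∀ X ∈ 𝒲, (σ X ∩ S).Infinite ∧ ∀ r ≤ ρ X, RestrictsInto ρ 𝒲 r X

def labelStep (σ : 𝒮 → Set U) (ρ : 𝒮 → ℛ) (P : Set U) : Set 𝒮 →o Set 𝒮 where
  toFun L := {X | (σ X ∩ P).Finite ∨ ∃ r ≤ ρ X, RestrictsOnlyInto ρ L r X}
  monotone' _ _ hL _ := Or.imp_right fun ⟨r, hr, h⟩ => ⟨r, hr, h.mono hL⟩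

/-- The labelled sorts. The paper's ordinal label of a sort is the stage at which it enters
this least fixed point. -/
def labelled (σ : 𝒮 → Set U) (ρ : 𝒮 → ℛ) (P : Set U) : Set 𝒮 :=
  OrderHom.lfp (labelStep σ ρ P)

theorem labelStep_labelled (σ : 𝒮 → Set U) (ρ : 𝒮 → ℛ) (P : Set U) :
    labelStep σ ρ P (labelled σ ρ P) = labelled σ ρ P :=
  OrderHom.map_lfp _

theorem isLargeWitness_compl_labelled (σ : 𝒮 → Set U) (ρ : 𝒮 → ℛ) (P : Set U) :
    IsLargeWitness σ ρ P (labelled σ ρ P)ᶜ := by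
  intro X hX
  rw [Set.mem_compl_iff, ← labelStep_labelled] at hX
  obtain ⟨hPinf, hnostep⟩ := not_or.mp hX
  exact ⟨hPinf, fun r hr => not_not.mp fun h => hnostep ⟨r, hr, not_restrictsInto_compl_iff.mp h⟩⟩

end Labelling

section LabelledIsLarge

variable {U 𝒮 ℛ : Type*} [Preorder 𝒮] [LinearOrder ℛ] {σ : 𝒮 → Set U} {ρ : 𝒮 → ℛ}
  (hrestrict : ∀ X r, r ≤ ρ X → ∃ R, R ≤ X ∧ ρ R = r) {P : Set U}

include hrestrict

theorem restrictsInto_labelled_of_finite_inter (hσmono : ∀ X Y : 𝒮, X ≤ Y → σ X ⊆ σ Y)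
    {X : 𝒮} (hX : (σ X ∩ P).Finite) {r : ℛ} (hr : r ≤ ρ X) :
    RestrictsInto ρ (labelled σ ρ P) r X := by
  refine ⟨X, ⟨le_rfl, rfl⟩, fun Z hZ hρZ => ?_⟩
  obtain ⟨R, hRZ, hρR⟩ := hrestrict Z r (hρZ ▸ hr)
  refine ⟨R, ⟨hRZ, hρR⟩, ?_⟩
  rw [← labelStep_labelled]
  exact Or.inl (hX.subset (Set.inter_subset_inter_left _ (hσmono R X (hRZ.trans hZ))))

/-- Rank `r` is reached through an `r₀`-restriction when `r ≤ r₀`; when `r₀ ≤ r`, every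
`r`-restriction of the refinement is itself labelled at rank `r₀`. -/
theorem restrictsInto_labelled_of_restrictsOnlyInto {𝒲 : Set 𝒮}
    (h𝒲 : ∀ R ∈ 𝒲, R ∈ labelled σ ρ P ∧ ∀ r ≤ ρ R, RestrictsInto ρ (labelled σ ρ P) r R)
    {X : 𝒮} {r₀ : ℛ} (hr₀ : r₀ ≤ ρ X) (hX : RestrictsOnlyInto ρ 𝒲 r₀ X) {r : ℛ} (hr : r ≤ ρ X) :
    RestrictsInto ρ (labelled σ ρ P) r X := by
  refine ⟨X, ⟨le_rfl, rfl⟩, fun Z hZX hρZ => ?_⟩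
  obtain ⟨Z', ⟨hZ'Z, hρZ'⟩, hZ'⟩ := hX Z hZX hρZ
  rcases le_total r r₀ with hrr₀ | hr₀r
  · obtain ⟨R', hR'Z', hρR'⟩ := hrestrict Z' r₀ (by rw [hρZ', hρZ]; exact hr₀)
    obtain ⟨Y, ⟨hYR', hρY⟩, hY⟩ := (h𝒲 R' (hZ' R' hR'Z' hρR')).2 r (hρR' ▸ hrr₀)
    obtain ⟨R, ⟨hRY, hρR⟩, hR⟩ := hY Y le_rfl rfl
    exact ⟨R, ⟨hRY.trans (hYR'.trans (hR'Z'.trans hZ'Z)), hρR⟩, hR⟩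
  · obtain ⟨R, hRZ', hρR⟩ := hrestrict Z' r (by rw [hρZ', hρZ]; exact hr)
    refine ⟨R, ⟨hRZ'.trans hZ'Z, hρR⟩, ?_⟩
    rw [← labelStep_labelled]
    refine Or.inr ⟨r₀, hρR ▸ hr₀r, fun Y hYR _ => ⟨Y, ⟨le_rfl, rfl⟩, fun R₀ hR₀Y hρR₀ => ?_⟩⟩
    exact (h𝒲 R₀ (hZ' R₀ (hR₀Y.trans (hYR.trans hRZ')) hρR₀)).1

theorem isLargeWitness_labelled (hσinf : ∀ X, (σ X).Infinite)
    (hσmono : ∀ X Y : 𝒮, X ≤ Y → σ X ⊆ σ Y) {S : Set U} (hcover : S ∪ P = Set.univ) :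
    IsLargeWitness σ ρ S (labelled σ ρ P) := by
  set L := labelled σ ρ P
  set G := {X ∈ L | (σ X ∩ S).Infinite ∧ ∀ r ≤ ρ X, RestrictsInto ρ L r X}
  suffices L ⊆ G from fun X hX => (this hX).2
  refine OrderHom.lfp_le _ fun X hX => ⟨?_, ?_⟩
  · exact (labelStep_labelled σ ρ P).subset ((labelStep σ ρ P).monotone (Set.sep_subset _ _) hX)
  rcases hX with hPfin | ⟨r₀, hr₀, hX⟩
  · exact ⟨(hσinf X).inter_of_finite_inter_of_union_eq_univ hPfin hcover,
      fun r hr => restrictsInto_labelled_of_finite_inter hrestrict hσmono hPfin hr⟩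
  · obtain ⟨R, hRG, hRX⟩ := hX.exists_mem_le hrestrict hr₀
    exact ⟨hRG.2.1.mono (Set.inter_subset_inter_left _ (hσmono R X hRX)),
      fun r hr => restrictsInto_labelled_of_restrictsOnlyInto hrestrict
        (fun R hR => ⟨hR.1, hR.2.2⟩) hr₀ hX hr⟩

end LabelledIsLarge

theorem large_partition_general {U 𝒮 ℛ : Type*} [PartialOrder 𝒮] [LinearOrder ℛ]
    (σ : 𝒮 → Set U) (ρ : 𝒮 → ℛ) (u : 𝒮)
    (hσinf : ∀ X, (σ X).Infinite)
    (hσmono : ∀ X Y : 𝒮, X ≤ Y → σ X ⊆ σ Y)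
    (hrestrict : ∀ X : 𝒮, ∀ r : ℛ, r ≤ ρ X → ∃ R, R ≤ X ∧ ρ R = r)
    (S P : Set U) (hcover : S ∪ P = Set.univ) :
    IsLarge σ ρ u S ∨ IsLarge σ ρ u P := by
  by_cases hu : u ∈ labelled σ ρ P
  · exact Or.inl ⟨_, hu, isLargeWitness_labelled hrestrict hσinf hσmono hcover⟩
  · exact Or.inr ⟨_, hu, isLargeWitness_compl_labelled σ ρ P⟩

theorem large_partition {U 𝒮 ℛ : Type*} [Infinite U] [PartialOrder 𝒮] [LinearOrder ℛ]
    (σ : 𝒮 → Set U) (ρ : 𝒮 → ℛ) (u : 𝒮)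
    (hmax : ∀ X, X ≤ u) (hσu : σ u = Set.univ)
    (hσinf : ∀ X, (σ X).Infinite)
    (hσmono : ∀ X Y : 𝒮, X ≤ Y → σ X ⊆ σ Y)
    (hρmono : ∀ X Y : 𝒮, X ≤ Y → ρ X ≤ ρ Y)
    (hrestrict : ∀ X : 𝒮, ∀ r : ℛ, r ≤ ρ X → ∃ R, R ≤ X ∧ ρ R = r)
    (S P : Set U) (hdisj : Disjoint S P) (hcover : S ∪ P = Set.univ) :
    IsLarge σ ρ u S ∨ IsLarge σ ρ u P :=
  large_partition_general σ ρ u hσinf hσmono hrestrict S P hcover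
end

section
/- In the setting of the abstract partition framework (𝕆 property): let λ_S be the ordinal labelling of sorts relative to S ⊆ U. If a sort X is labelled by λ_S, then every refinement of X is labelled, and σ(X) ∩ S is infinite. -/
/-!
Both claims are proved by induction over the least set closed under the labelling rules.
A refinement `Y` of `X` inherits `X`'s reason to be labelled: `σ Y \ S ⊆ σ X \ S`, and the
rank witnessing the second rule for `X` witnesses it for `Y` as well. For infinitude, the base
case is `σ X ∩ S = σ X \ (σ X \ S)`, and in the inductive case some `r`-restriction `R ≤ X`
is labelled, so `σ R ∩ S ⊆ σ X ∩ S` is infinite by induction.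
-/

/-- `W` is closed under the rules defining the labelling `λ_S`: a sort `X` is
labelled if `σ X \ S` is finite, or if there is a rank `r ≤ ρ X` such that for
every refinement `Y` of `X` there is a refinement `Z` of `Y` all of whose
`r`-restrictions are already labelled. -/
def LabelClosed {U 𝒮 ℛ : Type*} [PartialOrder 𝒮] [LinearOrder ℛ]
    (σ : 𝒮 → Set U) (ρ : 𝒮 → ℛ) (S : Set U) (W : Set 𝒮) : Prop :=
  (∀ X, (σ X \ S).Finite → X ∈ W) ∧
  (∀ X, (∃ r : ℛ, r ≤ ρ X ∧ ∀ Y, Y ≤ X → ρ Y = ρ X →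
      ∃ Z, Z ≤ Y ∧ ρ Z = ρ Y ∧ ∀ R, R ≤ Z → ρ R = r → R ∈ W) → X ∈ W)

/-- The set of sorts labelled by `λ_S`: the least set closed under the
recursive labelling rules. -/
def Labelled {U 𝒮 ℛ : Type*} [PartialOrder 𝒮] [LinearOrder ℛ]
    (σ : 𝒮 → Set U) (ρ : 𝒮 → ℛ) (S : Set U) : Set 𝒮 :=
  ⋂₀ {W | LabelClosed σ ρ S W}

section Labelling

variable {U 𝒮 ℛ : Type*} [PartialOrder 𝒮] [LinearOrder ℛ] {σ : 𝒮 → Set U} {ρ : 𝒮 → ℛ}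
  {S : Set U}

theorem labelled_subset_of_labelClosed {W : Set 𝒮} (hW : LabelClosed σ ρ S W) :
    Labelled σ ρ S ⊆ W :=
  Set.sInter_subset_of_mem hW

theorem labelClosed_labelled : LabelClosed σ ρ S (Labelled σ ρ S) := by
  constructor
  · intro X hfin W hW
    exact hW.1 X hfin
  · rintro X ⟨r, hr, hstep⟩ W hW
    refine hW.2 X ⟨r, hr, fun Y hYX hρY => ?_⟩
    obtain ⟨Z, hZY, hρZ, hRZ⟩ := hstep Y hYX hρY
    exact ⟨Z, hZY, hρZ, fun R hR hρR => hRZ R hR hρR W hW⟩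

theorem labelled_of_le_of_rho_eq (hσmono : ∀ X Y : 𝒮, X ≤ Y → σ X ⊆ σ Y) {X Y : 𝒮}
    (hX : X ∈ Labelled σ ρ S) (hYX : Y ≤ X) (hρY : ρ Y = ρ X) : Y ∈ Labelled σ ρ S := by
  let W : Set 𝒮 := {X | ∀ Y, Y ≤ X → ρ Y = ρ X → Y ∈ Labelled σ ρ S}
  have hWL : W ⊆ Labelled σ ρ S := fun R hR => hR R le_rfl rfl
  have hW : LabelClosed σ ρ S W := by
    constructor
    · intro X hfin Y hYX _
      exact labelClosed_labelled.1 Y (hfin.subset (Set.sdiff_subset_sdiff_left (hσmono Y X hYX)))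
    · rintro X ⟨r, hr, hstep⟩ Y hYX hρY
      refine labelClosed_labelled.2 Y ⟨r, hρY ▸ hr, fun Y' hY'Y hρY' => ?_⟩
      obtain ⟨Z, hZY', hρZ, hRZ⟩ := hstep Y' (hY'Y.trans hYX) (hρY'.trans hρY)
      exact ⟨Z, hZY', hρZ, fun R hR hρR => hWL (hRZ R hR hρR)⟩
  exact labelled_subset_of_labelClosed hW hX Y hYX hρY

theorem infinite_inter_of_labelled (hσinf : ∀ X, (σ X).Infinite)
    (hσmono : ∀ X Y : 𝒮, X ≤ Y → σ X ⊆ σ Y)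
    (hrestrict : ∀ X : 𝒮, ∀ r : ℛ, r ≤ ρ X → ∃ R, R ≤ X ∧ ρ R = r)
    {X : 𝒮} (hX : X ∈ Labelled σ ρ S) : (σ X ∩ S).Infinite := by
  have hW : LabelClosed σ ρ S {X | (σ X ∩ S).Infinite} := by
    constructor
    · intro X hfin
      have h := (hσinf X).sdiff hfin
      rwa [Set.sdiff_sdiff_right_self] at h
    · rintro X ⟨r, hr, hstep⟩
      obtain ⟨Z, hZX, hρZ, hRZ⟩ := hstep X le_rfl rfl
      obtain ⟨R, hRZ', hρR⟩ := hrestrict Z r (hρZ ▸ hr)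
      exact (hRZ R hRZ' hρR).mono (Set.inter_subset_inter_left S (hσmono R X (hRZ'.trans hZX)))
  exact labelled_subset_of_labelClosed hW hX

end Labelling

theorem labelled_refinement_and_infinite_general {U 𝒮 ℛ : Type*}
    [PartialOrder 𝒮] [LinearOrder ℛ]
    (σ : 𝒮 → Set U) (ρ : 𝒮 → ℛ)
    (hσinf : ∀ X, (σ X).Infinite)
    (hσmono : ∀ X Y : 𝒮, X ≤ Y → σ X ⊆ σ Y)
    (hrestrict : ∀ X : 𝒮, ∀ r : ℛ, r ≤ ρ X → ∃ R, R ≤ X ∧ ρ R = r)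
    (S : Set U) (X : 𝒮) (hX : X ∈ Labelled σ ρ S) :
    (∀ Y, Y ≤ X → ρ Y = ρ X → Y ∈ Labelled σ ρ S) ∧ (σ X ∩ S).Infinite :=
  ⟨fun _ hYX hρY => labelled_of_le_of_rho_eq hσmono hX hYX hρY,
    infinite_inter_of_labelled hσinf hσmono hrestrict hX⟩

theorem labelled_refinement_and_infinite {U 𝒮 ℛ : Type*} [Infinite U]
    [PartialOrder 𝒮] [LinearOrder ℛ]
    (σ : 𝒮 → Set U) (ρ : 𝒮 → ℛ) (u : 𝒮)
    (hmax : ∀ X, X ≤ u) (hσu : σ u = Set.univ)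
    (hσinf : ∀ X, (σ X).Infinite)
    (hσmono : ∀ X Y : 𝒮, X ≤ Y → σ X ⊆ σ Y)
    (hρmono : ∀ X Y : 𝒮, X ≤ Y → ρ X ≤ ρ Y)
    (hrestrict : ∀ X : 𝒮, ∀ r : ℛ, r ≤ ρ X → ∃ R, R ≤ X ∧ ρ R = r)
    (S : Set U) (X : 𝒮) (hX : X ∈ Labelled σ ρ S) :
    (∀ Y, Y ≤ X → ρ Y = ρ X → Y ∈ Labelled σ ρ S) ∧ (σ X ∩ S).Infinite :=
  labelled_refinement_and_infinite_general σ ρ hσinf hσmono hrestrict S X hX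
end

section
/- In the abstract partition framework with labelling λ_S: if a sort X is labelled and there exists a rank r₀ witnessing the labelling condition Φ(X, r₀) (for every refinement Y of X there is a refinement Z of Y all of whose r₀-restrictions are labelled), then Φ(X, r) holds for every rank r with r₀ ⊆ r ⊆ ρ(X). -/
/-- `Φ(X, r)`: `r ≤ ρ X` and for every refinement `Y` of `X` there is a
refinement `Z` of `Y` all of whose `r`-restrictions are labelled. -/
def Phi {U 𝒮 ℛ : Type*} [PartialOrder 𝒮] [LinearOrder ℛ]
    (σ : 𝒮 → Set U) (ρ : 𝒮 → ℛ) (S : Set U) (X : 𝒮) (r : ℛ) : Prop :=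
  r ≤ ρ X ∧ ∀ Y, Y ≤ X → ρ Y = ρ X →
    ∃ Z, Z ≤ Y ∧ ρ Z = ρ Y ∧ ∀ R, R ≤ Z → ρ R = r → R ∈ Labelled σ ρ S

section Labelled

variable {U 𝒮 ℛ : Type*} [PartialOrder 𝒮] [LinearOrder ℛ]
  {σ : 𝒮 → Set U} {ρ : 𝒮 → ℛ} {S : Set U} {X : 𝒮} {r₀ r : ℛ}

theorem labelled_of_forall_refinement (hr : r ≤ ρ X)
    (h : ∀ Y, Y ≤ X → ρ Y = ρ X →
      ∃ Z, Z ≤ Y ∧ ρ Z = ρ Y ∧ ∀ R, R ≤ Z → ρ R = r → R ∈ Labelled σ ρ S) :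
    X ∈ Labelled σ ρ S := fun W hW =>
  hW.2 X ⟨r, hr, fun Y hYX hρY => (h Y hYX hρY).imp fun _ ⟨hZY, hρZ, hZ⟩ =>
    ⟨hZY, hρZ, fun R hRZ hρR => hZ R hRZ hρR W hW⟩⟩

/-- Each refinement of `X` is its own witness `Z` in the labelling rule. -/
theorem labelled_of_forall_restriction (hr : r ≤ ρ X)
    (h : ∀ R, R ≤ X → ρ R = r → R ∈ Labelled σ ρ S) :
    X ∈ Labelled σ ρ S :=
  labelled_of_forall_refinement hr fun Y hYX _ =>
    ⟨Y, le_rfl, rfl, fun R hRY hρR => h R (hRY.trans hYX) hρR⟩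

/-- The `r`-restrictions of `Z` are labelled at rank `r₀`, since their `r₀`-restrictions
are `r₀`-restrictions of `Z`. -/
theorem Phi.mono_rank (hΦ : Phi σ ρ S X r₀) (h₁ : r₀ ≤ r) (h₂ : r ≤ ρ X) :
    Phi σ ρ S X r := by
  refine ⟨h₂, fun Y hYX hρY => ?_⟩
  obtain ⟨Z, hZY, hρZ, hZ⟩ := hΦ.2 Y hYX hρY
  refine ⟨Z, hZY, hρZ, fun R hRZ hρR => ?_⟩
  exact labelled_of_forall_restriction (hρR ▸ h₁) fun R' hR'R hρR' =>
    hZ R' (hR'R.trans hRZ) hρR'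

end Labelled

theorem phi_up_general {U 𝒮 ℛ : Type*} [PartialOrder 𝒮] [LinearOrder ℛ]
    (σ : 𝒮 → Set U) (ρ : 𝒮 → ℛ)
    (S : Set U) (X : 𝒮) (r₀ r : ℛ)
    (hΦ : Phi σ ρ S X r₀)
    (h₁ : r₀ ≤ r) (h₂ : r ≤ ρ X) :
    Phi σ ρ S X r :=
  hΦ.mono_rank h₁ h₂

theorem phi_up {U 𝒮 ℛ : Type*} [Infinite U] [PartialOrder 𝒮] [LinearOrder ℛ]
    (σ : 𝒮 → Set U) (ρ : 𝒮 → ℛ) (u : 𝒮)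
    (hmax : ∀ X, X ≤ u) (hσu : σ u = Set.univ)
    (hσinf : ∀ X, (σ X).Infinite)
    (hσmono : ∀ X Y : 𝒮, X ≤ Y → σ X ⊆ σ Y)
    (hρmono : ∀ X Y : 𝒮, X ≤ Y → ρ X ≤ ρ Y)
    (hrestrict : ∀ X : 𝒮, ∀ r : ℛ, r ≤ ρ X → ∃ R, R ≤ X ∧ ρ R = r)
    (S : Set U) (X : 𝒮) (r₀ r : ℛ)
    (hX : X ∈ Labelled σ ρ S) (hΦ : Phi σ ρ S X r₀)
    (h₁ : r₀ ≤ r) (h₂ : r ≤ ρ X) :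
    Phi σ ρ S X r :=
  phi_up_general σ ρ S X r₀ r hΦ h₁ h₂
end

section
/- Let S and R be countable relational structures in the same relational language such that every finite structure embeddable in S is embeddable in R. If the automorphism group of R is oligomorphic (for every n, finitely many orbits on n-tuples), then S embeds into R. -/
/-!
Enumerate `M` as `e 0, e 1, …`. For each `n`, the `n`-tuples of `N` with the same atomic type as
`(e 0, …, e (n - 1))` exist by the age hypothesis and fall into finitely many `Aut N`-orbits by
oligomorphy, and truncation maps such orbits at level `n + 1` to orbits at level `n`. König's lemma
picks a coherent orbit at every level. Moving representatives by automorphisms, each can be chosen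
to extend the previous one, and their union is an embedding of `M` into `N`.
-/

open FirstOrder FirstOrder.Language Function

universe u v

open CategoryTheory in
theorem exists_seq_mem_of_mapsTo {Q : ℕ → Type*} (S : ∀ n, Set (Q n))
    (hfin : ∀ n, (S n).Finite) (hne : ∀ n, (S n).Nonempty) (f : ∀ n, Q (n + 1) → Q n)
    (hf : ∀ n, Set.MapsTo (f n) (S (n + 1)) (S n)) :
    ∃ s : ∀ n, Q n, ∀ n, s n ∈ S n ∧ f n (s (n + 1)) = s n := by
  let F : ℕᵒᵖ ⥤ Type _ :=
    Functor.ofOpSequence (X := fun n => S n) fun n => TypeCat.ofHom (hf n).restrict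
  have (n : ℕᵒᵖ) : Finite (F.obj n) := (hfin n.unop).to_subtype
  have (n : ℕᵒᵖ) : Nonempty (F.obj n) := (hne n.unop).to_subtype
  obtain ⟨u, hu⟩ := nonempty_sections_of_finite_inverse_system F
  let t (n : ℕ) : S n := u ⟨n⟩
  refine ⟨fun n => t n, fun n => ⟨(t n).2, ?_⟩⟩
  have := hu (homOfLE (Nat.le_add_right n 1)).op
  simp only [F, Functor.ofOpSequence_map_homOfLE_succ] at this
  exact congrArg Subtype.val this

theorem exists_seq_forall_prefix {α : Type*} (P : ∀ n, (Fin n → α) → Prop)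
    (h0 : ∃ x, P 0 x) (hstep : ∀ n x, P n x → ∃ y, P (n + 1) y ∧ Fin.init y = x) :
    ∃ φ : ℕ → α, ∀ n, P n fun i => φ i := by
  choose y hy using hstep
  let c : ∀ n, {x // P n x} :=
    Nat.rec ⟨h0.choose, h0.choose_spec⟩ fun n x => ⟨y n x.1 x.2, (hy n x.1 x.2).1⟩
  have hc (n : ℕ) : Fin.init (c (n + 1)).1 = (c n).1 := (hy n _ _).2
  refine ⟨fun k => (c (k + 1)).1 (Fin.last k), fun n => ?_⟩
  suffices (fun i : Fin n => (c (i + 1)).1 (Fin.last i)) = (c n).1 from this ▸ (c n).2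
  induction n with
  | zero => exact funext fun i => i.elim0
  | succ n ih =>
    funext i
    induction i using Fin.lastCases with
    | last => rfl
    | cast j => exact (congrFun ih j).trans (congrFun (hc n) j).symm

namespace FirstOrder.Language

variable {L : Language} {ι κ : Type*} {M : Type u} {N : Type v} [L.Structure M] [L.Structure N]

variable (L) in
/-- `i ↦ (a i, x i)` is the graph of a partial isomorphism from `M` to `N`. -/
structure IsPartialIso (a : ι → M) (x : ι → N) : Prop where
  eq_iff : ∀ i j, x i = x j ↔ a i = a j
  relMap_iff : ∀ {k : ℕ} (r : L.Relations k) (v : Fin k → ι),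
    Structure.RelMap r (x ∘ v) ↔ Structure.RelMap r (a ∘ v)

namespace IsPartialIso

variable {a : ι → M} {x : ι → N}

theorem comp (h : L.IsPartialIso a x) (σ : κ → ι) : L.IsPartialIso (a ∘ σ) (x ∘ σ) :=
  ⟨fun i j => h.eq_iff (σ i) (σ j), fun r v => h.relMap_iff r (σ ∘ v)⟩

theorem embedding_comp {P : Type*} [L.Structure P] (h : L.IsPartialIso a x) (g : N ↪[L] P) :
    L.IsPartialIso a (g ∘ x) :=
  ⟨fun i j => g.injective.eq_iff.trans (h.eq_iff i j),
    fun r v => (g.map_rel r (x ∘ v)).trans (h.relMap_iff r v)⟩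

theorem exists_embedding_comp_eq [L.IsRelational] (h : L.IsPartialIso a x) (ha : Surjective a) :
    ∃ f : M ↪[L] N, f ∘ a = x := by
  refine ⟨⟨⟨x ∘ surjInv ha, fun m m' hm => ?_⟩, ?_, fun r v => ?_⟩, ?_⟩
  · simpa [surjInv_eq] using (h.eq_iff _ _).1 hm
  · exact fun f => isEmptyElim f
  · simpa [comp_def, surjInv_eq] using h.relMap_iff r (surjInv ha ∘ v)
  · funext i
    exact (h.eq_iff _ _).2 (surjInv_eq ha (a i))

end IsPartialIso

theorem isPartialIso_of_forall_prefix {e : ℕ → M} {φ : ℕ → N}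
    (h : ∀ n, L.IsPartialIso (fun i : Fin n => e i) (fun i : Fin n => φ i)) :
    L.IsPartialIso e φ := by
  refine ⟨fun i j => (h (max i j + 1)).eq_iff ⟨i, by omega⟩ ⟨j, by omega⟩,
    fun {k} r v => ?_⟩
  have hv (l : Fin k) : v l < Finset.univ.sup v + 1 :=
    Nat.lt_succ_of_le (Finset.le_sup (Finset.mem_univ l))
  exact (h _).relMap_iff r fun l => ⟨v l, hv l⟩

theorem exists_isPartialIso [Finite ι] [L.IsRelational]
    (hage : ∀ (A : Type u) [Fintype A] [L.Structure A],
      Nonempty (A ↪[L] M) → Nonempty (A ↪[L] N)) (a : ι → M) :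
    ∃ x : ι → N, L.IsPartialIso a x := by
  let S := Substructure.closure L (Set.range a)
  have hS : (S : Set M) = Set.range a := Substructure.closure_eq_of_isRelational L _
  have : Fintype S := (hS ▸ Set.finite_range a : (S : Set M).Finite).fintype
  obtain ⟨f⟩ := hage S ⟨S.subtype⟩
  have ha (i : ι) : a i ∈ S := by rw [← SetLike.mem_coe, hS]; exact Set.mem_range_self i
  refine ⟨fun i => f ⟨a i, ha i⟩, fun i j => ?_, fun r v => ?_⟩
  · simp
  · exact f.map_rel r _

variable (L ι N) in
def autSetoid : Setoid (ι → N) where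
  r x y := ∃ g : N ≃[L] N, ∀ i, g (x i) = y i
  iseqv :=
    { refl _ := ⟨.refl L N, fun _ => rfl⟩
      symm := fun ⟨g, hg⟩ => ⟨g.symm, fun i => by rw [← hg i]; exact g.symm_apply_apply _⟩
      trans := fun ⟨g, hg⟩ ⟨g', hg'⟩ => ⟨g'.comp g, fun i => by simp [hg, hg']⟩ }

variable (L ι N) in
abbrev AutOrbit : Type _ := Quotient (autSetoid L ι N)

theorem finite_autOrbit (h : ∃ T : Set (ι → N), T.Finite ∧
      ∀ x : ι → N, ∃ y ∈ T, ∃ g : N ≃[L] N, ∀ i, g (y i) = x i) :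
    Finite (AutOrbit L ι N) := by
  obtain ⟨T, hT, hTx⟩ := h
  have : Finite T := hT
  refine Finite.of_surjective (fun y : T => Quotient.mk _ y.1) fun q => ?_
  obtain ⟨x, rfl⟩ := q.exists_rep
  obtain ⟨y, hy, hyx⟩ := hTx x
  exact ⟨⟨y, hy⟩, Quotient.sound hyx⟩

def AutOrbit.restrict (σ : κ → ι) : AutOrbit L ι N → AutOrbit L κ N :=
  Quotient.map (· ∘ σ) <| by rintro _ _ ⟨g, hg⟩; exact ⟨g, fun k => hg (σ k)⟩

theorem AutOrbit.exists_lift {σ : κ → ι} {q : AutOrbit L ι N} {x : κ → N}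
    (h : q.restrict σ = Quotient.mk _ x) : ∃ y, Quotient.mk _ y = q ∧ y ∘ σ = x := by
  obtain ⟨y, rfl⟩ := q.exists_rep
  obtain ⟨g, hg⟩ := Quotient.exact h
  have hgy : autSetoid L ι N (g ∘ y) y := ⟨g.symm, fun i => g.symm_apply_apply _⟩
  exact ⟨g ∘ y, Quotient.sound hgy, funext hg⟩

theorem IsPartialIso.of_autSetoid {a : ι → M} {x y : ι → N} (h : L.IsPartialIso a x)
    (hxy : autSetoid L ι N x y) : L.IsPartialIso a y := by
  obtain ⟨g, hg⟩ := hxy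
  obtain rfl : y = g ∘ x := funext fun i => (hg i).symm
  exact h.embedding_comp g.toEmbedding

variable (L N) in
/-- The `Aut N`-orbits of the tuples of `N` with the same atomic type as `a`. -/
def typeOrbits (a : ι → M) : Set (AutOrbit L ι N) :=
  Quotient.mk _ '' {x | L.IsPartialIso a x}

theorem isPartialIso_of_mk_mem_typeOrbits {a : ι → M} {x : ι → N}
    (h : Quotient.mk _ x ∈ L.typeOrbits N a) : L.IsPartialIso a x := by
  obtain ⟨y, hy, hyx⟩ := h
  exact hy.of_autSetoid (Quotient.exact hyx)

theorem mapsTo_restrict_typeOrbits (a : ι → M) (σ : κ → ι) :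
    Set.MapsTo (AutOrbit.restrict σ) (L.typeOrbits N a) (L.typeOrbits N (a ∘ σ)) := by
  rintro _ ⟨x, hx, rfl⟩
  exact ⟨x ∘ σ, hx.comp σ, rfl⟩

end FirstOrder.Language

theorem cameron_age_embedding_general {L : Language} [L.IsRelational]
    (M N : Type) [Countable M] [L.Structure M] [L.Structure N]
    (hage : ∀ (A : Type) [Fintype A] [L.Structure A],
      Nonempty (A ↪[L] M) → Nonempty (A ↪[L] N))
    (holig : ∀ n : ℕ, ∃ T : Set (Fin n → N), T.Finite ∧
      ∀ x : Fin n → N, ∃ y ∈ T, ∃ g : N ≃[L] N, ∀ i, g (y i) = x i) :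
    Nonempty (M ↪[L] N) := by
  cases isEmpty_or_nonempty M
  · have := Fintype.ofIsEmpty (α := M)
    exact hage M ⟨Embedding.refl L M⟩
  obtain ⟨e, he⟩ := exists_surjective_nat M
  have (n : ℕ) : Finite (AutOrbit L (Fin n) N) := finite_autOrbit (holig n)
  obtain ⟨s, hs⟩ := exists_seq_mem_of_mapsTo (fun n => L.typeOrbits N fun i : Fin n => e i)
    (fun n => Set.toFinite _)
    (fun n => (exists_isPartialIso hage _).elim fun x hx => ⟨_, x, hx, rfl⟩)
    (fun n => AutOrbit.restrict Fin.castSucc) (fun n => mapsTo_restrict_typeOrbits _ _)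
  obtain ⟨φ, hφ⟩ :=
    exists_seq_forall_prefix (fun n x => Quotient.mk _ x = s n) (s 0).exists_rep fun n x hx =>
      AutOrbit.exists_lift ((hs n).2.trans hx.symm)
  have hφe : L.IsPartialIso e φ := isPartialIso_of_forall_prefix fun n =>
    isPartialIso_of_mk_mem_typeOrbits ((hφ n).symm ▸ (hs n).1)
  obtain ⟨f, -⟩ := hφe.exists_embedding_comp_eq he
  exact ⟨f⟩

/-- Cameron's theorem: if every finite structure embeddable in `M` embeds in `N`
and `N` is oligomorphic, then `M` embeds in `N`. -/
theorem cameron_age_embedding {L : Language} [L.IsRelational]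
    (M N : Type) [Countable M] [Countable N] [L.Structure M] [L.Structure N]
    (hage : ∀ (A : Type) [Fintype A] [L.Structure A],
      Nonempty (A ↪[L] M) → Nonempty (A ↪[L] N))
    (holig : ∀ n : ℕ, ∃ T : Set (Fin n → N), T.Finite ∧
      ∀ x : Fin n → N, ∃ y ∈ T, ∃ g : N ≃[L] N, ∀ i, g (y i) = x i) :
    Nonempty (M ↪[L] N) :=
  cameron_age_embedding_general M N hage holig
end
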